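/- arXiv:1509.06062 — 7 statements merged into one kernel-verified Lean document; each statement's English description precedes it below -/
import Mathlib

section
/- For all real numbers a, b with 0 ≤ a ≤ b and all p ≥ 1, one has b^p - a^p ≤ p * ((a^p + b^p)/2)^((p-1)/p) * (b - a). -/
/-!
Put `x = a ^ p`, `y = b ^ p` and `q = 1 / p ∈ (0, 1]`. Multiplied by `q * M ^ (q - 1)`, where
`M = (x + y) / 2`, the claim becomes `q * M ^ (q - 1) * (y - x) ≤ y ^ q - x ^ q`: the mean of the
derivative `t ↦ q * t ^ (q - 1)` of `t ↦ t ^ q` over `[x, y]` dominates its value at the midpoint.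
This is the left Hermite–Hadamard inequality for that derivative, which is convex because
`q - 1 ≤ 0`.
-/

open Real Set

theorem convexOn_rpow_of_nonpos {r : ℝ} (hr : r ≤ 0) :
    ConvexOn ℝ (Ioi 0) fun x : ℝ ↦ x ^ r := by
  have himage : log '' Ioi 0 = univ :=
    eq_univ_of_forall fun u ↦ ⟨exp u, exp_pos u, log_exp u⟩
  have hexp : ConvexOn ℝ (log '' Ioi 0) fun u ↦ exp (r * u) := by
    rw [himage]
    exact convexOn_exp.comp_linearMap (LinearMap.lsmul ℝ ℝ r)
  refine (hexp.comp_concaveOn strictConcaveOn_log_Ioi.concaveOn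
    fun u _ v _ huv ↦ exp_le_exp.2 (mul_le_mul_of_nonpos_left huv hr)).congr fun x hx ↦ ?_
  simp [rpow_def_of_pos (mem_Ioi.1 hx), mul_comm]

theorem sub_mul_midpoint_le_sub_of_convexOn_deriv {f f' : ℝ → ℝ} {x y : ℝ} (hxy : x ≤ y)
    (hf : ContinuousOn f (Icc x y)) (hf' : ∀ t ∈ Ioo x y, HasDerivAt f (f' t) t)
    (hconv : ConvexOn ℝ (Ioo x y) f') :
    (y - x) * f' ((x + y) / 2) ≤ f y - f x := by
  set m := (x + y) / 2 with hm
  set r := (y - x) / 2 with hr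
  have hr₀ : 0 ≤ r := by linarith
  have mem_Icc_of_mem {s : ℝ} (hs : s ∈ Icc 0 r) : m + s ∈ Icc x y ∧ m - s ∈ Icc x y := by
    constructor <;> constructor <;> linarith [hs.1, hs.2]
  have mem_Ioo_of_mem {s : ℝ} (hs : s ∈ Ioo 0 r) : m + s ∈ Ioo x y ∧ m - s ∈ Ioo x y := by
    constructor <;> constructor <;> linarith [hs.1, hs.2]
  -- The derivative `f' (m + s) + f' (m - s) - 2 * f' m` is nonnegative by midpoint convexity.
  have hmono : MonotoneOn (fun s ↦ f (m + s) - f (m - s) - 2 * s * f' m) (Icc 0 r) := by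
    refine monotoneOn_of_hasDerivWithinAt_nonneg
      (f' := fun s ↦ f' (m + s) + f' (m - s) - 2 * f' m) (convex_Icc 0 r) ?_ ?_ ?_
    · exact ((hf.comp (by fun_prop) fun s hs ↦ (mem_Icc_of_mem hs).1).sub
        (hf.comp (by fun_prop) fun s hs ↦ (mem_Icc_of_mem hs).2)).sub (by fun_prop)
    · intro s hs
      rw [interior_Icc] at hs
      have h : HasDerivAt (fun s ↦ f (m + s) - f (m - s) - 2 * s * f' m)
          (f' (m + s) - -f' (m - s) - 2 * 1 * f' m) s :=
        (((hf' _ (mem_Ioo_of_mem hs).1).comp_const_add m s).sub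
          ((hf' _ (mem_Ioo_of_mem hs).2).comp_const_sub m s)).sub
          (((hasDerivAt_id' s).const_mul 2).mul_const (f' m))
      exact (h.congr_deriv (by ring)).hasDerivWithinAt
    · intro s hs
      rw [interior_Icc] at hs
      have hmid := hconv.2 (mem_Ioo_of_mem hs).1 (mem_Ioo_of_mem hs).2
        (by norm_num : (0 : ℝ) ≤ 1 / 2) (by norm_num : (0 : ℝ) ≤ 1 / 2) (by norm_num)
      simp only [smul_eq_mul, show 1 / 2 * (m + s) + 1 / 2 * (m - s) = m by ring] at hmid
      linarith
  have hends := hmono (left_mem_Icc.2 hr₀) (right_mem_Icc.2 hr₀) hr₀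
  simp only [show m + r = y by ring, show m - r = x by ring, add_zero, sub_zero, mul_zero,
    zero_mul, sub_self] at hends
  rw [hr] at hends
  linarith

theorem mul_midpoint_rpow_mul_sub_le_rpow_sub_rpow {x y q : ℝ} (hx : 0 ≤ x) (hxy : x ≤ y)
    (hq₀ : 0 < q) (hq₁ : q ≤ 1) :
    q * ((x + y) / 2) ^ (q - 1) * (y - x) ≤ y ^ q - x ^ q := by
  have hconv : ConvexOn ℝ (Ioo x y) fun t ↦ q * t ^ (q - 1) :=
    ((convexOn_rpow_of_nonpos (by linarith)).smul hq₀.le).subset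
      (fun t ht ↦ hx.trans_lt ht.1) (convex_Ioo x y)
  have := sub_mul_midpoint_le_sub_of_convexOn_deriv hxy
    (continuous_rpow_const hq₀.le).continuousOn
    (fun t ht ↦ hasDerivAt_rpow_const (.inl (hx.trans_lt ht.1).ne')) hconv
  linarith

/-- Amghibech's chain-rule substitute: the underlying real-variable inequality. -/
theorem amghibech_chain_rule (a b p : ℝ) (ha : 0 ≤ a) (hab : a ≤ b) (hp : 1 ≤ p) :
    b ^ p - a ^ p ≤ p * ((a ^ p + b ^ p) / 2) ^ ((p - 1) / p) * (b - a) := by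
  have hp₀ : 0 < p := one_pos.trans_le hp
  rcases (ha.trans hab).eq_or_lt with rfl | hb
  · obtain rfl : a = 0 := le_antisymm hab ha
    simp
  set M := (a ^ p + b ^ p) / 2
  have hM : 0 < M := half_pos (add_pos_of_nonneg_of_pos (rpow_nonneg ha p) (rpow_pos_of_pos hb p))
  have key := mul_midpoint_rpow_mul_sub_le_rpow_sub_rpow (rpow_nonneg ha p)
    (rpow_le_rpow ha hab hp₀.le) (inv_pos.2 hp₀) (inv_le_one_of_one_le₀ hp)
  rw [rpow_rpow_inv ha hp₀.ne', rpow_rpow_inv (ha.trans hab) hp₀.ne'] at key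
  have hexp : (p - 1) / p + (p⁻¹ - 1) = 0 := by field_simp; ring
  have hcancel : p * M ^ ((p - 1) / p) * (p⁻¹ * M ^ (p⁻¹ - 1)) = 1 := by
    rw [mul_mul_mul_comm, mul_inv_cancel₀ hp₀.ne', ← rpow_add hM, hexp, rpow_zero, one_mul]
  calc b ^ p - a ^ p = p * M ^ ((p - 1) / p) * (p⁻¹ * M ^ (p⁻¹ - 1) * (b ^ p - a ^ p)) := by
        rw [← mul_assoc, hcancel, one_mul]
    _ ≤ p * M ^ ((p - 1) / p) * (b - a) := by gcongr
end

section
/- For all real numbers a, b with 0 < a < b and p > 1, one has ((b^p - a^p)/(p*(b-a)))^(p/(p-1)) ≤ (b^(p+1) - a^(p+1))/((p+1)*(b-a)). -/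
/-!
The two sides are the averages over `[a, b]` of `x ^ (p - 1)` and of
`x ^ p = (x ^ (p - 1)) ^ (p / (p - 1))`, so the inequality is Jensen's inequality for the
convex function `y ↦ y ^ (p / (p - 1))` on `[0, ∞)` with respect to normalized Lebesgue measure
on `[a, b]`.
-/

open MeasureTheory Set

theorem rpow_average_le_average_rpow {α : Type*} [MeasurableSpace α] {μ : Measure α}
    [IsFiniteMeasure μ] [NeZero μ] {f : α → ℝ} {q : ℝ} (hq : 1 ≤ q) (hf : ∀ᵐ x ∂μ, 0 ≤ f x)
    (hfi : Integrable f μ) (hfqi : Integrable (fun x ↦ f x ^ q) μ) :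
    (⨍ x, f x ∂μ) ^ q ≤ ⨍ x, f x ^ q ∂μ :=
  (convexOn_rpow hq).map_average_le
    (continuousOn_id.rpow_const fun _ _ ↦ Or.inr (zero_le_one.trans hq)) isClosed_Ici hf hfi hfqi

theorem interval_average_rpow {r : ℝ} (hr : -1 < r) (a b : ℝ) :
    ⨍ x in a..b, x ^ r = (b ^ (r + 1) - a ^ (r + 1)) / ((r + 1) * (b - a)) := by
  rw [interval_average_eq_div, integral_rpow (Or.inl hr), div_div, mul_comm]

theorem rpow_interval_average_rpow_le {a b r s : ℝ} (ha : 0 ≤ a) (hab : a < b) (hr : 0 < r)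
    (hrs : r ≤ s) : (⨍ x in a..b, x ^ r) ^ (s / r) ≤ ⨍ x in a..b, x ^ s := by
  rw [uIoc_of_le hab.le]
  have : NeZero (volume.restrict (Ioc a b)) := ⟨by simp [hab]⟩
  have hnonneg : ∀ x ∈ Ioc a b, 0 ≤ x := fun x hx ↦ ha.trans hx.1.le
  have hpow : EqOn (fun x ↦ (x ^ r) ^ (s / r)) (fun x ↦ x ^ s) (Ioc a b) := fun x hx ↦ by
    simp only [← Real.rpow_mul (hnonneg x hx), mul_div_cancel₀ s hr.ne']
  have hint : ∀ t : ℝ, 0 < t → Integrable (fun x : ℝ ↦ x ^ t) (volume.restrict (Ioc a b)) :=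
    fun t ht ↦ (intervalIntegral.intervalIntegrable_rpow' (by linarith)).1
  calc (⨍ x in Ioc a b, x ^ r) ^ (s / r) ≤ ⨍ x in Ioc a b, (x ^ r) ^ (s / r) :=
        rpow_average_le_average_rpow ((one_le_div hr).2 hrs)
          ((ae_restrict_mem measurableSet_Ioc).mono fun x hx ↦ Real.rpow_nonneg (hnonneg x hx) r)
          (hint r hr)
          ((hint s (hr.trans_le hrs)).congr
            ((ae_restrict_mem measurableSet_Ioc).mono fun x hx ↦ (hpow hx).symm))
    _ = ⨍ x in Ioc a b, x ^ s := setAverage_congr_fun measurableSet_Ioc (.of_forall hpow)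

/-- Jensen-type inequality for power means on an interval. -/
theorem jensen_power_mean (a b p : ℝ) (ha : 0 < a) (hab : a < b) (hp : 1 < p) :
    ((b ^ p - a ^ p) / (p * (b - a))) ^ (p / (p - 1)) ≤
      (b ^ (p + 1) - a ^ (p + 1)) / ((p + 1) * (b - a)) := by
  have h := rpow_interval_average_rpow_le ha.le hab (sub_pos.2 hp) (sub_le_self p zero_le_one)
  rwa [interval_average_rpow (by linarith), interval_average_rpow (by linarith),
    sub_add_cancel] at h
end

section
/- Let X be a countable set, w : X × X → [0,∞) symmetric, and f : X → [0,∞). Then (1/2) * Σ_{x,y ∈ X} w(x,y) * |f(x) - f(y)| = ∫_0^∞ w(∂Ω_t(f)) dt, where Ω_t(f) = {x ∈ X : f(x) > t}, ∂W = W × (X \ W), and w(∂W) = Σ_{(x,y) ∈ ∂W} w(x,y). Both sides may be +∞. -/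
open MeasureTheory ENNReal

/-- Co-area formula on a countable discrete set:
`(1/2) Σ_{x,y} w(x,y) |f(x) - f(y)| = ∫_0^∞ w(∂Ω_t(f)) dt`,
where `Ω_t(f) = {x : f x > t}` and `∂W = W × (X \ W)`. Both sides may be `+∞`. -/
theorem coarea_formula {X : Type*} [Countable X]
    (w : X → X → ℝ≥0∞) (hw : ∀ x y, w x y = w y x)
    (f : X → ℝ) (hf : ∀ x, 0 ≤ f x) :
    (1 / 2) * ∑' x : X, ∑' y : X, w x y * ENNReal.ofReal (|f x - f y|) =
      ∫⁻ t in Set.Ioi (0 : ℝ),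
        ∑' x : X, ∑' y : X, (if f x > t ∧ ¬ f y > t then w x y else 0) := by
  -- rewrite the indicator-like function as a set indicator
  have key : ∀ x y : X, (fun t : ℝ => if f x > t ∧ ¬ f y > t then w x y else 0)
      = (Set.Ico (f y) (f x)).indicator (fun _ => w x y) := by
    intro x y; funext t
    by_cases h : f x > t ∧ ¬ f y > t
    · have hm : t ∈ Set.Ico (f y) (f x) := ⟨not_lt.1 h.2, h.1⟩
      rw [if_pos h, Set.indicator_of_mem hm]
    · rw [if_neg h, Set.indicator_of_notMem]
      intro ht; exact h ⟨ht.2, not_lt.2 ht.1⟩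
  have meas_calc : ∀ x y : X,
      volume (Set.Ico (f y) (f x) ∩ Set.Ioi 0) = ENNReal.ofReal (f x - f y) := by
    intro x y
    rcases (hf y).lt_or_eq with h | h
    · have hsub : Set.Ico (f y) (f x) ⊆ Set.Ioi 0 := fun t ht => lt_of_lt_of_le h ht.1
      rw [Set.inter_eq_left.2 hsub, Real.volume_Ico]
    · have h0 : f y = 0 := h.symm
      rw [h0]
      have hset : Set.Ico (0:ℝ) (f x) ∩ Set.Ioi 0 = Set.Ioo 0 (f x) := by
        ext t
        simp only [Set.mem_inter_iff, Set.mem_Ico, Set.mem_Ioi, Set.mem_Ioo]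
        constructor
        · rintro ⟨⟨_, h2⟩, h3⟩; exact ⟨h3, h2⟩
        · rintro ⟨h1, h2⟩; exact ⟨⟨le_of_lt h1, h2⟩, h1⟩
      rw [hset, Real.volume_Ioo, sub_zero]
  have integral_eq : ∀ x y : X,
      (∫⁻ t in Set.Ioi (0:ℝ), (if f x > t ∧ ¬ f y > t then w x y else 0))
        = w x y * ENNReal.ofReal (f x - f y) := by
    intro x y
    rw [show (fun t : ℝ => if f x > t ∧ ¬ f y > t then w x y else 0)
        = (Set.Ico (f y) (f x)).indicator (fun _ => w x y) from key x y]
    rw [lintegral_indicator_const measurableSet_Ico,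
      Measure.restrict_apply measurableSet_Ico, meas_calc x y]
  -- compute the RHS
  have hRHS : (∫⁻ t in Set.Ioi (0 : ℝ),
        ∑' x : X, ∑' y : X, (if f x > t ∧ ¬ f y > t then w x y else 0))
      = ∑' x : X, ∑' y : X, w x y * ENNReal.ofReal (f x - f y) := by
    have h1 : ∀ t : ℝ, (∑' x : X, ∑' y : X, (if f x > t ∧ ¬ f y > t then w x y else 0))
        = ∑' p : X × X, (if f p.1 > t ∧ ¬ f p.2 > t then w p.1 p.2 else 0) :=
      fun t => (ENNReal.tsum_prod (f := fun x y => if f x > t ∧ ¬ f y > t then w x y else 0)).symm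
    rw [lintegral_congr h1, lintegral_tsum (fun p => by
        rw [show (fun t : ℝ => if f p.1 > t ∧ ¬ f p.2 > t then w p.1 p.2 else 0) = _ from
          key p.1 p.2]
        exact (measurable_const.indicator measurableSet_Ico).aemeasurable),
      show (∑' p : X × X, ∫⁻ t in Set.Ioi (0:ℝ),
        (if f p.1 > t ∧ ¬ f p.2 > t then w p.1 p.2 else 0)) = _ from ?_]
    calc (∑' p : X × X, ∫⁻ t in Set.Ioi (0:ℝ),
            (if f p.1 > t ∧ ¬ f p.2 > t then w p.1 p.2 else 0))
        = ∑' p : X × X, w p.1 p.2 * ENNReal.ofReal (f p.1 - f p.2) :=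
          tsum_congr fun p => integral_eq p.1 p.2
      _ = ∑' x : X, ∑' y : X, w x y * ENNReal.ofReal (f x - f y) :=
          ENNReal.tsum_prod (f := fun x y => w x y * ENNReal.ofReal (f x - f y))
  rw [hRHS]
  -- symmetrize the LHS
  have habs : ∀ x y : X, ENNReal.ofReal (|f x - f y|)
      = ENNReal.ofReal (f x - f y) + ENNReal.ofReal (f y - f x) := by
    intro x y
    rcases le_total (f x) (f y) with h | h
    · rw [abs_sub_comm, abs_of_nonneg (sub_nonneg.2 h),
        ENNReal.ofReal_of_nonpos (sub_nonpos.2 h), zero_add]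
    · rw [abs_of_nonneg (sub_nonneg.2 h),
        ENNReal.ofReal_of_nonpos (sub_nonpos.2 h), add_zero]
  have hsplit : (∑' x : X, ∑' y : X, w x y * ENNReal.ofReal (|f x - f y|))
      = (∑' x : X, ∑' y : X, w x y * ENNReal.ofReal (f x - f y))
        + (∑' x : X, ∑' y : X, w x y * ENNReal.ofReal (f y - f x)) := by
    rw [← ENNReal.tsum_add]
    refine tsum_congr fun x => ?_
    rw [← ENNReal.tsum_add]
    refine tsum_congr fun y => ?_
    rw [habs x y, mul_add]
  have hswap : (∑' x : X, ∑' y : X, w x y * ENNReal.ofReal (f y - f x))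
      = ∑' x : X, ∑' y : X, w x y * ENNReal.ofReal (f x - f y) := by
    rw [ENNReal.tsum_comm]
    exact tsum_congr fun x => tsum_congr fun y => by rw [hw x y]
  rw [hsplit, hswap, ← two_mul, ← mul_assoc, one_div,
    ENNReal.inv_mul_cancel (by norm_num) (by norm_num), one_mul]
end

section
/- Let X be a finite set, b a graph over (X, m) with m : X → (0,∞), p > 1, and let d ∈ R_p(b,m), i.e., d symmetric with Σ_y b(x,y) d(x,y)^(p/(p-1)) ≤ m(x) for all x. Define h⁰(d) = min over nonempty W ⊆ X of |∂W|_{bd}/m(W), where |∂W|_{bd} = Σ_{(x,y) ∈ W×(X\W)} b(x,y)d(x,y). Then for every nonzero φ : X → ℝ, (2^(p-1)/p^p) * h⁰(d)^p ≤ E_p(φ)/‖φ‖_{m,p}^p, where E_p(φ) = (1/2)Σ_{x,y} b(x,y)|φ(x)-φ(y)|^p and ‖φ‖_{m,p}^p = Σ_x m(x)|φ(x)|^p. -/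
/-!
Write `ψ = |φ| ^ p` and `N = ∑ m ψ`. Cutting `ψ` into its level sets, each of which has
boundary at least `h` times its mass, gives the co-area bound
`h N ≤ ∑ b d (ψ x - ψ y)⁺ = ½ ∑ b d |ψ x - ψ y|`.
Since `t ↦ t ^ (1/p)` is concave with convex derivative,
`| |s| ^ p - |t| ^ p | ≤ p |s - t| ((|s| ^ p + |t| ^ p) / 2) ^ (1/q)` with `q = p / (p - 1)`.
Hölder's inequality with weights `b` then bounds `h N` by
`(p/2) (∑ b |φ x - φ y| ^ p) ^ (1/p) (∑ b d ^ q (ψ x + ψ y) / 2) ^ (1/q)`, and the last sum is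
at most `N` because `d ∈ R_p(b, m)`. Raising `h N ≤ (p/2) (2 E_p(φ)) ^ (1/p) N ^ (1/q)` to the
power `p` gives the claim.
-/

open Real Finset

theorem two_mul_rpow_le_rpow_add_add_rpow_sub {c m δ : ℝ} (hc : c ≤ 0) (hδ : 0 ≤ δ)
    (hδm : δ < m) : 2 * m ^ c ≤ (m + δ) ^ c + (m - δ) ^ c := by
  have hm : 0 < m := hδ.trans_lt hδm
  have hsq : ∀ t : ℝ, 0 < t → (t ^ (c / 2)) ^ 2 = t ^ c := fun t ht => by
    rw [← rpow_natCast, ← rpow_mul ht.le]; norm_num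
  have hprod : m ^ c ≤ (m + δ) ^ (c / 2) * (m - δ) ^ (c / 2) := by
    calc m ^ c = (m ^ 2) ^ (c / 2) := by rw [← rpow_natCast, ← rpow_mul hm.le]; ring_nf
      _ ≤ ((m + δ) * (m - δ)) ^ (c / 2) :=
          rpow_le_rpow_of_nonpos (by nlinarith) (by nlinarith) (by linarith)
      _ = _ := mul_rpow (by linarith) (by linarith)
  nlinarith [sq_nonneg ((m + δ) ^ (c / 2) - (m - δ) ^ (c / 2)), hsq (m + δ) (by linarith),
    hsq (m - δ) (by linarith)]

/-- The chord of the concave function `t ↦ t ^ s` over `[v, u]` is at least as steep as its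
tangent at the midpoint, because the derivative `s t ^ (s - 1)` is convex. -/
theorem mul_rpow_midpoint_mul_sub_le_rpow_sub_rpow {s u v : ℝ} (hs0 : 0 < s) (hs1 : s ≤ 1)
    (hv : 0 ≤ v) (hvu : v ≤ u) :
    s * ((u + v) / 2) ^ (s - 1) * (u - v) ≤ u ^ s - v ^ s := by
  rcases hvu.eq_or_lt with rfl | hvu
  · simp
  set m := (u + v) / 2 with hm
  set G : ℝ → ℝ := fun δ => (m + δ) ^ s - (m - δ) ^ s - 2 * s * m ^ (s - 1) * δ
  have hG_cont : ContinuousOn G (Set.Icc 0 ((u - v) / 2)) := by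
    refine ContinuousOn.sub (ContinuousOn.sub ?_ ?_) (by fun_prop) <;>
      exact (Continuous.continuousOn (by fun_prop)).rpow_const fun _ _ => Or.inr hs0.le
  have hG_deriv : ∀ δ ∈ Set.Ioo 0 ((u - v) / 2), HasDerivAt G
      (s * (m + δ) ^ (s - 1) + s * (m - δ) ^ (s - 1) - 2 * s * m ^ (s - 1)) δ := by
    rintro δ ⟨hδ0, hδ⟩
    have h₁ := ((hasDerivAt_id' δ).const_add m).rpow_const (p := s) (Or.inl (by linarith))
    have h₂ := ((hasDerivAt_id' δ).const_sub m).rpow_const (p := s) (Or.inl (by linarith))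
    have h₃ := (hasDerivAt_id' δ).const_mul (2 * s * m ^ (s - 1))
    exact ((h₁.sub h₂).sub h₃).congr_deriv (by ring)
  have hG_mono : MonotoneOn G (Set.Icc 0 ((u - v) / 2)) := by
    refine monotoneOn_of_hasDerivWithinAt_nonneg (convex_Icc _ _) hG_cont
      (f' := fun δ => s * (m + δ) ^ (s - 1) + s * (m - δ) ^ (s - 1) - 2 * s * m ^ (s - 1))
      (fun δ hδ => ?_) (fun δ hδ => ?_) <;> rw [interior_Icc] at hδ
    · exact (hG_deriv δ hδ).hasDerivWithinAt
    · have := two_mul_rpow_le_rpow_add_add_rpow_sub (c := s - 1) (by linarith) hδ.1.le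
        (show δ < m by linarith [hδ.2])
      nlinarith
  have hG := hG_mono (Set.left_mem_Icc.2 (by linarith)) (Set.right_mem_Icc.2 (by linarith))
    (by linarith)
  have hu : m + (u - v) / 2 = u := by ring
  have hv' : m - (u - v) / 2 = v := by ring
  simp only [G, add_zero, sub_zero, mul_zero, sub_self, hu, hv'] at hG
  linarith

theorem rpow_sub_rpow_le_mul_sub_mul_rpow_midpoint {p A B : ℝ} (hp : 1 ≤ p) (hB : 0 ≤ B)
    (hBA : B ≤ A) :
    A ^ p - B ^ p ≤ p * (A - B) * ((A ^ p + B ^ p) / 2) ^ ((p - 1) / p) := by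
  have hp0 : 0 < p := by linarith
  rcases hBA.eq_or_lt with rfl | hBA
  · simp
  set M := (A ^ p + B ^ p) / 2
  have hM : 0 < M := by
    have := rpow_pos_of_pos (hB.trans_lt hBA) p
    have := rpow_nonneg hB p
    positivity
  have hslope := mul_rpow_midpoint_mul_sub_le_rpow_sub_rpow (s := 1 / p) (by positivity)
    ((div_le_one hp0).2 hp) (rpow_nonneg hB p) (rpow_le_rpow hB hBA.le hp0.le)
  rw [← rpow_mul (hB.trans hBA.le), ← rpow_mul hB, mul_one_div_cancel hp0.ne', rpow_one,
    rpow_one] at hslope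
  have hcancel : M ^ (1 / p - 1) * M ^ ((p - 1) / p) = 1 := by
    rw [← rpow_add hM]; field_simp; simp
  calc A ^ p - B ^ p
      = p * (1 / p) * (M ^ (1 / p - 1) * M ^ ((p - 1) / p)) * (A ^ p - B ^ p) := by
        rw [hcancel, mul_one_div_cancel hp0.ne', one_mul, one_mul]
    _ = p * M ^ ((p - 1) / p) * (1 / p * M ^ (1 / p - 1) * (A ^ p - B ^ p)) := by ring
    _ ≤ p * M ^ ((p - 1) / p) * (A - B) := by gcongr
    _ = p * (A - B) * M ^ ((p - 1) / p) := by ring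

theorem abs_abs_rpow_sub_abs_rpow_le {p : ℝ} (hp : 1 ≤ p) (x y : ℝ) :
    |(|x| ^ p - |y| ^ p)| ≤ p * |x - y| * ((|x| ^ p + |y| ^ p) / 2) ^ ((p - 1) / p) := by
  wlog hxy : |y| ≤ |x| generalizing x y
  · rw [abs_sub_comm, abs_sub_comm x, add_comm]
    exact this y x (le_of_not_ge hxy)
  rw [abs_of_nonneg (sub_nonneg.2 (rpow_le_rpow (abs_nonneg y) hxy (by linarith)))]
  refine (rpow_sub_rpow_le_mul_sub_mul_rpow_midpoint hp (abs_nonneg y) hxy).trans ?_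
  gcongr
  exact abs_sub_abs_le_abs_sub x y

theorem max_sub_eq_max_sub_add_ite {a u v : ℝ} (ha : 0 < a) (hu : u = 0 ∨ a ≤ u)
    (hv : v = 0 ∨ a ≤ v) :
    max (u - v) 0 = max (max (u - a) 0 - max (v - a) 0) 0 + if 0 < u ∧ ¬0 < v then a else 0 := by
  rcases hu with rfl | hu <;> rcases hv with rfl | hv
  · simp [ha.le]
  · simp [(ha.trans_le hv).le, ha.le, hv]
  · simp [ha.trans_le hu, (ha.trans_le hu).le, ha.le, hu]
  · simp [ha.trans_le hv, ha.trans_le hu, hu, hv]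

theorem sum_sum_mul_ite_mem_and_not_mem {X : Type*} [Fintype X] [DecidableEq X] (w : X → X → ℝ)
    (W : Finset X) (a : ℝ) :
    ∑ x, ∑ y, w x y * (if x ∈ W ∧ y ∉ W then a else 0) = a * ∑ x ∈ W, ∑ y ∈ Wᶜ, w x y := by
  simp only [ite_and, mul_ite, mul_zero, sum_ite_irrel, sum_const_zero, ← mem_compl,
    sum_ite_mem, univ_inter, mul_comm a, sum_mul]

/-- Peeling off the bottom layer `a = min ψ` of the support `W = {ψ > 0}` writes
`ψ = max (ψ - a) 0 + a 𝟙_W`; the remainder has smaller support, and the layer contributes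
`a (h μ(W) - ∂W) ≤ 0`. -/
theorem mul_sum_mul_le_sum_sum_mul_max_sub {X : Type*} [Fintype X] [DecidableEq X]
    {w : X → X → ℝ} {μ : X → ℝ} {h : ℝ}
    (hcut : ∀ W : Finset X, W.Nonempty → h * ∑ x ∈ W, μ x ≤ ∑ x ∈ W, ∑ y ∈ Wᶜ, w x y)
    {ψ : X → ℝ} (hψ : ∀ x, 0 ≤ ψ x) :
    h * ∑ x, μ x * ψ x ≤ ∑ x, ∑ y, w x y * max (ψ x - ψ y) 0 := by
  induction hn : #{x | 0 < ψ x} using Nat.strong_induction_on generalizing ψ with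
  | _ n ih =>
  set W : Finset X := {x | 0 < ψ x}
  have hW_mem : ∀ x, x ∈ W ↔ 0 < ψ x := fun x => by simp [W]
  rcases W.eq_empty_or_nonempty with hW_empty | hW_ne
  · have hψ0 : ∀ x, ψ x = 0 := fun x =>
      le_antisymm (not_lt.1 fun hx => by simpa [hW_empty] using (hW_mem x).2 hx) (hψ x)
    simp [hψ0]
  obtain ⟨x₀, hx₀, hmin⟩ := W.exists_min_image ψ hW_ne
  set a := ψ x₀
  have ha : 0 < a := (hW_mem x₀).1 hx₀
  have hlayer : ∀ x, ψ x = 0 ∨ a ≤ ψ x := fun x =>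
    (hψ x).eq_or_lt.imp Eq.symm fun hx => hmin x ((hW_mem x).2 hx)
  set ψ' : X → ℝ := fun x => max (ψ x - a) 0
  have hψ_split : ∀ x, ψ x = ψ' x + if x ∈ W then a else 0 := fun x => by
    rcases hlayer x with hx | hx
    · simp [ψ', hW_mem, hx, ha.le]
    · simp [ψ', hW_mem, hx, ha.trans_le hx]
  have hmax_split : ∀ x y, max (ψ x - ψ y) 0 =
      max (ψ' x - ψ' y) 0 + if x ∈ W ∧ y ∉ W then a else 0 := fun x y => by
    simpa only [hW_mem] using max_sub_eq_max_sub_add_ite ha (hlayer x) (hlayer y)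
  have hsupp : #{x | 0 < ψ' x} < n := by
    refine hn ▸ card_lt_card
      (Finset.ssubset_of_subset_of_ssubset (fun x hx => ?_) (erase_ssubset hx₀))
    simp only [mem_filter, mem_univ, true_and, ψ', lt_max_iff, lt_irrefl, or_false,
      sub_pos] at hx
    exact mem_erase.2 ⟨fun h => by simp [h, a] at hx, (hW_mem x).2 (ha.trans hx)⟩
  calc h * ∑ x, μ x * ψ x
      = h * ∑ x, μ x * ψ' x + a * (h * ∑ x ∈ W, μ x) := by
        simp only [hψ_split, mul_add, sum_add_distrib, mul_ite, mul_zero, sum_ite_mem,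
          univ_inter, mul_sum]
        congr 1
        exact sum_congr rfl fun _ _ => by ring
    _ ≤ ∑ x, ∑ y, w x y * max (ψ' x - ψ' y) 0 + a * ∑ x ∈ W, ∑ y ∈ Wᶜ, w x y := by
        gcongr
        · exact ih _ hsupp (fun x => le_max_right _ _) rfl
        · exact hcut W hW_ne
    _ = ∑ x, ∑ y, w x y * max (ψ x - ψ y) 0 := by
        simp only [hmax_split, mul_add, sum_add_distrib, sum_sum_mul_ite_mem_and_not_mem]

theorem sum_sum_mul_max_sub_eq_half_sum_sum_mul_abs {X : Type*} [Fintype X] {w : X → X → ℝ}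
    (hw : ∀ x y, w x y = w y x) (f : X → ℝ) :
    ∑ x, ∑ y, w x y * max (f x - f y) 0 = 1 / 2 * ∑ x, ∑ y, w x y * |f x - f y| := by
  have hswap : ∑ x, ∑ y, w x y * max (f x - f y) 0 = ∑ x, ∑ y, w x y * max (-(f x - f y)) 0 := by
    rw [sum_comm]
    simp only [hw, neg_sub]
  simp only [← max_zero_add_max_neg_zero_eq_abs_self, mul_add, sum_add_distrib, ← hswap]
  ring

theorem sum_mul_mul_le_weighted_Lp_mul_Lq {ι : Type*} (s : Finset ι) {p q : ℝ}
    (hpq : p.HolderConjugate q) {w f g : ι → ℝ} (hw : ∀ i ∈ s, 0 ≤ w i) (hf : ∀ i ∈ s, 0 ≤ f i)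
    (hg : ∀ i ∈ s, 0 ≤ g i) :
    ∑ i ∈ s, w i * f i * g i ≤
      (∑ i ∈ s, w i * f i ^ p) ^ (1 / p) * (∑ i ∈ s, w i * g i ^ q) ^ (1 / q) := by
  have hsplit : ∀ i ∈ s, w i * f i * g i = (w i ^ (1 / p) * f i) * (w i ^ (1 / q) * g i) :=
    fun i hi => by
      rw [mul_mul_mul_comm, ← rpow_add' (hw i hi) (by simp [hpq.inv_add_inv_eq_one]),
        one_div, one_div, hpq.inv_add_inv_eq_one, rpow_one]; ring
  have hpow : ∀ {r : ℝ}, r ≠ 0 → ∀ {u : ι → ℝ}, (∀ i ∈ s, 0 ≤ u i) →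
      ∀ i ∈ s, (w i ^ (1 / r) * u i) ^ r = w i * u i ^ r := fun hr u hu i hi => by
    rw [mul_rpow (rpow_nonneg (hw i hi) _) (hu i hi), one_div, rpow_inv_rpow (hw i hi) hr]
  rw [sum_congr rfl hsplit, ← sum_congr rfl (hpow hpq.ne_zero hf),
    ← sum_congr rfl (hpow hpq.symm.ne_zero hg)]
  exact inner_le_Lp_mul_Lq_of_nonneg s hpq
    (fun i hi => mul_nonneg (rpow_nonneg (hw i hi) _) (hf i hi))
    (fun i hi => mul_nonneg (rpow_nonneg (hw i hi) _) (hg i hi))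

theorem sum_sum_mul_midpoint_le_sum_mul {X : Type*} [Fintype X] {k : X → X → ℝ}
    (hk : ∀ x y, k x y = k y x) {m ψ : X → ℝ} (hψ : ∀ x, 0 ≤ ψ x)
    (hkm : ∀ x, ∑ y, k x y ≤ m x) :
    ∑ x, ∑ y, k x y * ((ψ x + ψ y) / 2) ≤ ∑ x, m x * ψ x := by
  have hswap : ∑ x, ∑ y, k x y * ψ y = ∑ x, ∑ y, k x y * ψ x := by
    rw [sum_comm]; simp only [hk]
  calc ∑ x, ∑ y, k x y * ((ψ x + ψ y) / 2)
      = ∑ x, (∑ y, k x y) * ψ x := by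
        simp only [mul_add, add_div, sum_add_distrib, mul_div_assoc', ← sum_div,
          hswap, sum_mul]
        ring
    _ ≤ ∑ x, m x * ψ x := sum_le_sum fun x _ => mul_le_mul_of_nonneg_right (hkm x) (hψ x)

theorem sum_sum_mul_abs_sub_mul_le {X : Type*} [Fintype X] {p q : ℝ} (hpq : p.HolderConjugate q)
    {b d : X → X → ℝ} (hb0 : ∀ x y, 0 ≤ b x y) (hd0 : ∀ x y, 0 ≤ d x y)
    (hbsymm : ∀ x y, b x y = b y x) (hdsymm : ∀ x y, d x y = d y x) {m ψ : X → ℝ}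
    (hψ : ∀ x, 0 ≤ ψ x) (hdm : ∀ x, ∑ y, b x y * d x y ^ q ≤ m x) (f : X → ℝ) :
    ∑ x, ∑ y, b x y * |f x - f y| * (d x y * ((ψ x + ψ y) / 2) ^ (1 / q)) ≤
      (∑ x, ∑ y, b x y * |f x - f y| ^ p) ^ (1 / p) * (∑ x, m x * ψ x) ^ (1 / q) := by
  have hmid : ∀ x y, 0 ≤ (ψ x + ψ y) / 2 := fun x y => by linarith [hψ x, hψ y]
  have hholder := sum_mul_mul_le_weighted_Lp_mul_Lq univ hpq
    (w := fun z : X × X => b z.1 z.2) (f := fun z => |f z.1 - f z.2|)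
    (g := fun z => d z.1 z.2 * ((ψ z.1 + ψ z.2) / 2) ^ (1 / q)) (fun z _ => hb0 _ _)
    (fun z _ => abs_nonneg _) (fun z _ => mul_nonneg (hd0 _ _) (rpow_nonneg (hmid _ _) _))
  have hpow : ∀ x y, b x y * (d x y * ((ψ x + ψ y) / 2) ^ (1 / q)) ^ q =
      b x y * d x y ^ q * ((ψ x + ψ y) / 2) := fun x y => by
    rw [mul_rpow (hd0 x y) (rpow_nonneg (hmid x y) _), one_div,
      rpow_inv_rpow (hmid x y) hpq.symm.ne_zero, mul_assoc]
  simp only [Fintype.sum_prod_type, hpow] at hholder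
  refine hholder.trans (mul_le_mul_of_nonneg_left (rpow_le_rpow ?_ ?_ hpq.symm.one_div_nonneg)
    (rpow_nonneg (sum_nonneg fun x _ => sum_nonneg fun y _ =>
      mul_nonneg (hb0 x y) (rpow_nonneg (abs_nonneg _) p)) _))
  · exact sum_nonneg fun x _ => sum_nonneg fun y _ =>
      mul_nonneg (mul_nonneg (hb0 x y) (rpow_nonneg (hd0 x y) q)) (hmid x y)
  · exact sum_sum_mul_midpoint_le_sum_mul (fun x y => by rw [hbsymm, hdsymm]) hψ hdm

theorem mul_sum_mul_abs_rpow_le {X : Type*} [Fintype X] [DecidableEq X] {p q : ℝ}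
    (hpq : p.HolderConjugate q) {b d : X → X → ℝ} (hb0 : ∀ x y, 0 ≤ b x y)
    (hd0 : ∀ x y, 0 ≤ d x y) (hbsymm : ∀ x y, b x y = b y x) (hdsymm : ∀ x y, d x y = d y x)
    {m : X → ℝ} (hdm : ∀ x, ∑ y, b x y * d x y ^ q ≤ m x) {h : ℝ}
    (hcut : ∀ W : Finset X, W.Nonempty →
      h * ∑ x ∈ W, m x ≤ ∑ x ∈ W, ∑ y ∈ Wᶜ, b x y * d x y) (φ : X → ℝ) :
    h * ∑ x, m x * |φ x| ^ p ≤
      p / 2 * (∑ x, ∑ y, b x y * |φ x - φ y| ^ p) ^ (1 / p) *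
        (∑ x, m x * |φ x| ^ p) ^ (1 / q) := by
  set ψ : X → ℝ := fun x => |φ x| ^ p
  have hψ : ∀ x, 0 ≤ ψ x := fun x => rpow_nonneg (abs_nonneg _) p
  have hexp : (p - 1) / p = 1 / q := by
    rw [one_div q, ← hpq.one_sub_inv, sub_div, div_self hpq.ne_zero, one_div]
  calc h * ∑ x, m x * ψ x
      ≤ ∑ x, ∑ y, b x y * d x y * max (ψ x - ψ y) 0 :=
        mul_sum_mul_le_sum_sum_mul_max_sub hcut hψ
    _ = 1 / 2 * ∑ x, ∑ y, b x y * d x y * |ψ x - ψ y| :=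
        sum_sum_mul_max_sub_eq_half_sum_sum_mul_abs (fun x y => by rw [hbsymm, hdsymm]) ψ
    _ ≤ 1 / 2 * ∑ x, ∑ y, b x y * d x y * (p * |φ x - φ y| * ((ψ x + ψ y) / 2) ^ (1 / q)) := by
        gcongr with x _ y _
        · exact mul_nonneg (hb0 x y) (hd0 x y)
        · exact hexp ▸ abs_abs_rpow_sub_abs_rpow_le hpq.lt.le (φ x) (φ y)
    _ = p / 2 * ∑ x, ∑ y, b x y * |φ x - φ y| * (d x y * ((ψ x + ψ y) / 2) ^ (1 / q)) := by
        simp only [mul_sum]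
        exact sum_congr rfl fun x _ => sum_congr rfl fun y _ => by ring
    _ ≤ _ := by
        rw [mul_assoc]
        exact mul_le_mul_of_nonneg_left
          (sum_sum_mul_abs_sub_mul_le hpq hb0 hd0 hbsymm hdsymm hψ hdm φ) (by linarith [hpq.pos])

theorem rpow_mul_le_of_mul_le_mul_rpow_mul_rpow {p q h N c A : ℝ} (hpq : p.HolderConjugate q)
    (hh : 0 ≤ h) (hN : 0 < N) (hc : 0 ≤ c) (hA : 0 ≤ A)
    (H : h * N ≤ c * A ^ (1 / p) * N ^ (1 / q)) : h ^ p * N ≤ c ^ p * A := by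
  have hp := hpq.pos
  have hN' : h * N ^ (1 / p) ≤ c * A ^ (1 / p) := by
    rwa [← mul_le_mul_iff_of_pos_right (rpow_pos_of_pos hN (1 / q)), mul_assoc, ← rpow_add hN,
      one_div, one_div, hpq.inv_add_inv_eq_one, rpow_one, ← one_div, ← one_div]
  calc h ^ p * N = (h * N ^ (1 / p)) ^ p := by
        rw [mul_rpow hh (rpow_nonneg hN.le _), ← rpow_mul hN.le, one_div_mul_cancel hp.ne',
          rpow_one]
    _ ≤ (c * A ^ (1 / p)) ^ p := by gcongr
    _ = c ^ p * A := by
        rw [mul_rpow hc (rpow_nonneg hA _), ← rpow_mul hA, one_div_mul_cancel hp.ne', rpow_one]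

theorem sInf_div_nonneg {ι : Type*} {P : ι → Prop} {F G : ι → ℝ} (hF : ∀ i, 0 ≤ F i)
    (hG : ∀ i, 0 ≤ G i) : 0 ≤ sInf {r | ∃ i, P i ∧ r = F i / G i} :=
  Real.sInf_nonneg fun _ ⟨i, _, hr⟩ => hr ▸ div_nonneg (hF i) (hG i)

theorem sInf_div_mul_le {ι : Type*} {P : ι → Prop} {F G : ι → ℝ} (hF : ∀ i, 0 ≤ F i)
    (hG : ∀ i, 0 ≤ G i) {i : ι} (hi : P i) (hGi : 0 < G i) :
    sInf {r | ∃ i, P i ∧ r = F i / G i} * G i ≤ F i :=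
  (le_div_iff₀ hGi).1 <| csInf_le ⟨0, fun _ ⟨j, _, hr⟩ => hr ▸ div_nonneg (hF j) (hG j)⟩
    ⟨i, hi, rfl⟩

theorem cheeger_inequality_dirichlet_general {X : Type*} [Fintype X] [DecidableEq X]
    (b : X → X → ℝ) (hb0 : ∀ x y, 0 ≤ b x y) (hbsymm : ∀ x y, b x y = b y x)
    (m : X → ℝ) (hm : ∀ x, 0 < m x) (p : ℝ) (hp : 1 < p)
    (d : X → X → ℝ) (hd0 : ∀ x y, 0 ≤ d x y) (hdsymm : ∀ x y, d x y = d y x)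
    (hdRp : ∀ x, ∑ y, b x y * d x y ^ (p / (p - 1)) ≤ m x)
    (h : ℝ)
    (hh : h = sInf {r : ℝ | ∃ W : Finset X, W.Nonempty ∧
      r = (∑ x ∈ W, ∑ y ∈ Wᶜ, b x y * d x y) / (∑ x ∈ W, m x)})
    (φ : X → ℝ) (hφ : φ ≠ 0) :
    (2 ^ (p - 1) / p ^ p) * h ^ p ≤
      ((1 / 2) * ∑ x, ∑ y, b x y * |φ x - φ y| ^ p) / (∑ x, m x * |φ x| ^ p) := by
  have hpq : p.HolderConjugate (p / (p - 1)) := .conjExponent hp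
  have hcut_nonneg : ∀ W : Finset X, 0 ≤ ∑ x ∈ W, ∑ y ∈ Wᶜ, b x y * d x y := fun W =>
    sum_nonneg fun x _ => sum_nonneg fun y _ => mul_nonneg (hb0 x y) (hd0 x y)
  have hmW : ∀ W : Finset X, 0 ≤ ∑ x ∈ W, m x := fun W => sum_nonneg fun x _ => (hm x).le
  have hh0 : 0 ≤ h := hh ▸ sInf_div_nonneg hcut_nonneg hmW
  have hcut : ∀ W : Finset X, W.Nonempty → h * ∑ x ∈ W, m x ≤ ∑ x ∈ W, ∑ y ∈ Wᶜ, b x y * d x y :=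
    fun W hW => hh ▸ sInf_div_mul_le hcut_nonneg hmW hW (sum_pos (fun x _ => hm x) hW)
  have hN : 0 < ∑ x, m x * |φ x| ^ p := by
    obtain ⟨x₀, hx₀⟩ := Function.ne_iff.1 hφ
    exact sum_pos' (fun x _ => mul_nonneg (hm x).le (rpow_nonneg (abs_nonneg _) p))
      ⟨x₀, mem_univ _, mul_pos (hm x₀) (rpow_pos_of_pos (abs_pos.2 hx₀) p)⟩
  have hE : 0 ≤ ∑ x, ∑ y, b x y * |φ x - φ y| ^ p := sum_nonneg fun x _ => sum_nonneg
    fun y _ => mul_nonneg (hb0 x y) (rpow_nonneg (abs_nonneg _) p)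
  have hbound := rpow_mul_le_of_mul_le_mul_rpow_mul_rpow hpq hh0 hN (by positivity) hE
    (mul_sum_mul_abs_rpow_le hpq hb0 hd0 hbsymm hdsymm hdRp hcut φ)
  rw [le_div_iff₀ hN, mul_assoc]
  calc 2 ^ (p - 1) / p ^ p * (h ^ p * ∑ x, m x * |φ x| ^ p)
      ≤ 2 ^ (p - 1) / p ^ p * ((p / 2) ^ p * ∑ x, ∑ y, b x y * |φ x - φ y| ^ p) :=
        mul_le_mul_of_nonneg_left hbound (by positivity)
    _ = 1 / 2 * ∑ x, ∑ y, b x y * |φ x - φ y| ^ p := by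
      rw [div_rpow hpq.nonneg zero_le_two, rpow_sub_one two_ne_zero]
      field_simp

/-- Cheeger inequality for the Dirichlet p-spectral gap (Theorem 3.1, finite version):
for `d ∈ R_p(b,m)`, `(2^(p-1)/p^p) h⁰(d)^p ≤ E_p(φ)/‖φ‖_{m,p}^p` for every nonzero `φ`. -/
theorem cheeger_inequality_dirichlet {X : Type*} [Fintype X] [DecidableEq X] [Nonempty X]
    (b : X → X → ℝ) (hb0 : ∀ x y, 0 ≤ b x y) (hbsymm : ∀ x y, b x y = b y x)
    (hbdiag : ∀ x, b x x = 0)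
    (m : X → ℝ) (hm : ∀ x, 0 < m x) (p : ℝ) (hp : 1 < p)
    (d : X → X → ℝ) (hd0 : ∀ x y, 0 ≤ d x y) (hdsymm : ∀ x y, d x y = d y x)
    (hdRp : ∀ x, ∑ y, b x y * d x y ^ (p / (p - 1)) ≤ m x)
    (h : ℝ)
    (hh : h = sInf {r : ℝ | ∃ W : Finset X, W.Nonempty ∧
      r = (∑ x ∈ W, ∑ y ∈ Wᶜ, b x y * d x y) / (∑ x ∈ W, m x)})
    (φ : X → ℝ) (hφ : φ ≠ 0) :
    (2 ^ (p - 1) / p ^ p) * h ^ p ≤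
      ((1 / 2) * ∑ x, ∑ y, b x y * |φ x - φ y| ^ p) / (∑ x, m x * |φ x| ^ p) :=
  cheeger_inequality_dirichlet_general b hb0 hbsymm m hm p hp d hd0 hdsymm hdRp h hh φ hφ
end

section
/- Let X be a finite set, b a graph over (X, m), p ≥ 1, and W ⊆ X with 0 < m(W) ≤ m(X)/2 and W ≠ X. Define f_W = m(X\W)·1_W − m(W)·1_{X\W}. Then Σ_x f_W(x) m(x) = 0 and E_p(f_W)/‖f_W‖_{m,p}^p ≤ 2^(p-1) · |∂W|_b / m(W). -/
lemma real_add_rpow_le {a b p : ℝ} (ha : 0 ≤ a) (hb : 0 ≤ b) (hp : 1 ≤ p) :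
    (a + b) ^ p ≤ 2 ^ (p - 1) * (a ^ p + b ^ p) := by
  have h := NNReal.rpow_add_le_mul_rpow_add_rpow a.toNNReal b.toNNReal hp
  have h' := NNReal.coe_le_coe.2 h
  push_cast [NNReal.coe_rpow, Real.coe_toNNReal a ha, Real.coe_toNNReal b hb] at h'
  exact h'

/-- Test function estimate for the Neumann upper bound (proof of Theorem 3.9):
`f_W = m(X\W)·1_W − m(W)·1_{X\W}` has mean zero and Rayleigh quotient at most
`2^(p-1) |∂W|_b / m(W)`. -/
theorem neumann_test_function_estimate {X : Type*} [Fintype X] [DecidableEq X]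
    (b : X → X → ℝ) (hb0 : ∀ x y, 0 ≤ b x y) (hbsymm : ∀ x y, b x y = b y x)
    (hbdiag : ∀ x, b x x = 0)
    (m : X → ℝ) (hm : ∀ x, 0 < m x) (p : ℝ) (hp : 1 ≤ p)
    (W : Finset X) (hWne : W.Nonempty) (hWproper : W ≠ Finset.univ)
    (hWhalf : ∑ x ∈ W, m x ≤ (∑ x, m x) / 2)
    (f : X → ℝ)
    (hf : ∀ x, f x = if x ∈ W then ∑ y ∈ Wᶜ, m y else -(∑ y ∈ W, m y)) :
    ∑ x, f x * m x = 0 ∧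
    ((1 / 2) * ∑ x, ∑ y, b x y * |f x - f y| ^ p) / (∑ x, m x * |f x| ^ p) ≤
      2 ^ (p - 1) * (∑ x ∈ W, ∑ y ∈ Wᶜ, b x y) / (∑ x ∈ W, m x) := by
  set a := ∑ x ∈ W, m x with ha_def
  set c := ∑ x ∈ Wᶜ, m x with hc_def
  have ha : 0 < a := Finset.sum_pos (fun x _ => hm x) hWne
  have hWcne : (Wᶜ : Finset X).Nonempty := by rw [Finset.nonempty_iff_ne_empty, Ne, Finset.compl_eq_empty_iff]; exact hWproper
  have hc : 0 < c := Finset.sum_pos (fun x _ => hm x) hWcne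
  have htot : ∑ x, m x = a + c := (Finset.sum_add_sum_compl W m).symm
  have hac : a ≤ c := by rw [htot] at hWhalf; linarith
  have hp0 : p ≠ 0 := by linarith
  have hfW : ∀ x ∈ W, f x = c := fun x hx => by rw [hf x, if_pos hx]
  have hfWc : ∀ x ∈ Wᶜ, f x = -a := fun x hx => by
    rw [hf x, if_neg (Finset.mem_compl.mp hx)]
  constructor
  · rw [← Finset.sum_add_sum_compl W]
    have h1 : ∑ x ∈ W, f x * m x = c * a := by
      rw [Finset.sum_congr rfl (fun x hx => by rw [hfW x hx]), ← Finset.mul_sum]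
    have h2 : ∑ x ∈ Wᶜ, f x * m x = -a * c := by
      rw [Finset.sum_congr rfl (fun x hx => by rw [hfWc x hx]), ← Finset.mul_sum]
    rw [h1, h2]; ring
  · set B := ∑ x ∈ W, ∑ y ∈ Wᶜ, b x y with hB_def
    have hB : 0 ≤ B :=
      Finset.sum_nonneg fun x _ => Finset.sum_nonneg fun y _ => hb0 x y
    have hcross : ∀ x ∈ W, ∀ y ∈ Wᶜ, |f x - f y| ^ p = (a + c) ^ p := by
      intro x hx y hy
      rw [hfW x hx, hfWc y hy, sub_neg_eq_add, abs_of_nonneg (by linarith), add_comm c a]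
    have hnum : ∑ x, ∑ y, b x y * |f x - f y| ^ p = 2 * ((a + c) ^ p * B) := by
      rw [← Finset.sum_add_sum_compl W]
      have e1 : ∑ x ∈ W, ∑ y, b x y * |f x - f y| ^ p = (a + c) ^ p * B := by
        rw [hB_def, Finset.mul_sum]
        refine Finset.sum_congr rfl fun x hx => ?_
        rw [← Finset.sum_add_sum_compl W (fun y => b x y * |f x - f y| ^ p)]
        have hz : ∑ y ∈ W, b x y * |f x - f y| ^ p = 0 :=
          Finset.sum_eq_zero fun y hy => by
            rw [hfW x hx, hfW y hy]; simp [Real.zero_rpow hp0]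
        rw [hz, zero_add, Finset.mul_sum]
        exact Finset.sum_congr rfl fun y hy => by rw [hcross x hx y hy]; ring
      have e2 : ∑ x ∈ Wᶜ, ∑ y, b x y * |f x - f y| ^ p = (a + c) ^ p * B := by
        have step : ∑ x ∈ Wᶜ, ∑ y, b x y * |f x - f y| ^ p
            = ∑ x ∈ Wᶜ, ∑ y ∈ W, b x y * (a + c) ^ p := by
          refine Finset.sum_congr rfl fun x hx => ?_
          rw [← Finset.sum_add_sum_compl W (fun y => b x y * |f x - f y| ^ p)]
          have hz : ∑ y ∈ Wᶜ, b x y * |f x - f y| ^ p = 0 :=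
            Finset.sum_eq_zero fun y hy => by
              rw [hfWc x hx, hfWc y hy]; simp [Real.zero_rpow hp0]
          rw [hz, add_zero]
          refine Finset.sum_congr rfl fun y hy => ?_
          rw [hfWc x hx, hfW y hy]
          have : |-a - c| = a + c := by
            rw [abs_of_nonpos (by linarith)]; ring
          rw [this]
        rw [step, Finset.sum_comm, hB_def, Finset.mul_sum]
        refine Finset.sum_congr rfl fun x hx => ?_
        rw [Finset.mul_sum]
        exact Finset.sum_congr rfl fun y hy => by rw [hbsymm y x]; ring
      rw [e1, e2]; ring
    have hden : ∑ x, m x * |f x| ^ p = a * c ^ p + c * a ^ p := by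
      rw [← Finset.sum_add_sum_compl W]
      have d1 : ∑ x ∈ W, m x * |f x| ^ p = a * c ^ p := by
        rw [Finset.sum_congr rfl (fun x hx => by
          rw [hfW x hx, abs_of_nonneg hc.le]), ← Finset.sum_mul]
      have d2 : ∑ x ∈ Wᶜ, m x * |f x| ^ p = c * a ^ p := by
        rw [Finset.sum_congr rfl (fun x hx => by
          rw [hfWc x hx, abs_neg, abs_of_nonneg ha.le]), ← Finset.sum_mul]
      rw [d1, d2]
    rw [hnum, hden]
    have hdenpos : 0 < a * c ^ p + c * a ^ p := by positivity
    have hhalf : (1 / 2 : ℝ) * (2 * ((a + c) ^ p * B)) = (a + c) ^ p * B := by ring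
    rw [hhalf, div_le_div_iff₀ hdenpos ha]
    have key : a * (a + c) ^ p ≤ 2 ^ (p - 1) * (a * c ^ p + c * a ^ p) := by
      have h1 : (a + c) ^ p ≤ 2 ^ (p - 1) * (a ^ p + c ^ p) :=
        real_add_rpow_le ha.le hc.le hp
      have h2 : a * (a + c) ^ p ≤ a * (2 ^ (p - 1) * (a ^ p + c ^ p)) :=
        mul_le_mul_of_nonneg_left h1 ha.le
      have h3 : a * a ^ p ≤ c * a ^ p :=
        mul_le_mul_of_nonneg_right hac (Real.rpow_nonneg ha.le p)
      have h4 : (0:ℝ) ≤ 2 ^ (p - 1) := Real.rpow_nonneg (by norm_num) _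
      nlinarith
    nlinarith [mul_le_mul_of_nonneg_left key hB]
end

section
/- Let X be a countable set, b a graph over (X, m), p ≥ 1, and let d be a pseudo metric on X such that Σ_y b(x,y) d(x,y)^p ≤ m(x) for all x. Fix x₀ ∈ X, r ∈ ℕ, α > 0, and define f(x) = max(min(e^(αr), e^(α(2r − d(x₀,x)))) − 1, 0) and g(x) = (f(x)+2)·1_{B_{2r}}(x), where B_{2r} = {x : d(x₀,x) ≤ 2r}. Then for all x, y ∈ X, (f(x) − f(y))^p ≤ (α^p/2)·(g(x)^p + g(y)^p)·d(x,y)^p. -/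
/-- Trapezoid-rule upper bound for the exponential: for `t ≤ s`,
`e^s − e^t ≤ (s−t)·(e^s+e^t)/2`. -/
lemma exp_trapezoid_aux {s t : ℝ} (h : t ≤ s) :
    Real.exp s - Real.exp t ≤ (s - t) * ((Real.exp s + Real.exp t) / 2) := by
  set F : ℝ → ℝ := fun v => (v - t) * ((Real.exp v + Real.exp t) / 2) - (Real.exp v - Real.exp t)
    with hF
  have key : ∀ u : ℝ, HasDerivAt F
      (1 * ((Real.exp u + Real.exp t) / 2) + (u - t) * (Real.exp u / 2) - Real.exp u) u := by
    intro u
    have h1 : HasDerivAt (fun v : ℝ => v - t) 1 u := (hasDerivAt_id u).sub_const t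
    have h2 : HasDerivAt (fun v => (Real.exp v + Real.exp t) / 2) (Real.exp u / 2) u :=
      ((Real.hasDerivAt_exp u).add_const _).div_const 2
    have h4 : HasDerivAt (fun v => Real.exp v - Real.exp t) (Real.exp u) u :=
      (Real.hasDerivAt_exp u).sub_const _
    exact (h1.mul h2).sub h4
  have mono : Monotone F := by
    apply monotone_of_deriv_nonneg (fun u => (key u).differentiableAt)
    intro u
    rw [(key u).deriv]
    have e1 : Real.exp (t - u) * Real.exp u = Real.exp t := by
      rw [← Real.exp_add]; ring_nf
    have e2 : t - u + 1 ≤ Real.exp (t - u) := Real.add_one_le_exp _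
    have e3 : (t - u + 1) * Real.exp u ≤ Real.exp t := by
      nlinarith [Real.exp_pos u]
    nlinarith [Real.exp_pos u]
  have h0 : F t = 0 := by simp [hF]
  have := mono h
  rw [h0] at this
  simpa [hF] using this

/-- `|e^s − e^t| ≤ |s−t|·(e^s+e^t)/2`. -/
lemma exp_trapezoid (s t : ℝ) :
    |Real.exp s - Real.exp t| ≤ |s - t| * ((Real.exp s + Real.exp t) / 2) := by
  rcases le_total t s with h | h
  · rw [abs_of_nonneg (by simpa using Real.exp_le_exp.mpr h : (0:ℝ) ≤ Real.exp s - Real.exp t),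
      abs_of_nonneg (by linarith)]
    exact exp_trapezoid_aux h
  · rw [abs_sub_comm, abs_sub_comm s t,
      abs_of_nonneg (by simpa using Real.exp_le_exp.mpr h : (0:ℝ) ≤ Real.exp t - Real.exp s),
      abs_of_nonneg (by linarith)]
    calc Real.exp t - Real.exp s ≤ (t - s) * ((Real.exp t + Real.exp s) / 2) :=
          exp_trapezoid_aux h
      _ = (t - s) * ((Real.exp s + Real.exp t) / 2) := by ring

/-- Midpoint convexity of `x ↦ x^p` on nonnegative reals, for `p ≥ 1`. -/
lemma rpow_midpoint {p a b : ℝ} (hp : 1 ≤ p) (ha : 0 ≤ a) (hb : 0 ≤ b) :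
    ((a + b) / 2) ^ p ≤ (a ^ p + b ^ p) / 2 := by
  have h := (convexOn_rpow hp).2 (Set.mem_Ici.mpr ha) (Set.mem_Ici.mpr hb)
    (by norm_num : (0:ℝ) ≤ 1/2) (by norm_num : (0:ℝ) ≤ 1/2) (by norm_num)
  simp only [smul_eq_mul] at h
  calc ((a + b) / 2) ^ p = (1/2 * a + 1/2 * b) ^ p := by ring_nf
    _ ≤ 1/2 * a ^ p + 1/2 * b ^ p := h
    _ = (a ^ p + b ^ p) / 2 := by ring

/-- Lipschitz-type estimate for the Brooks-theorem test functions (Lemma 4.3):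
`(f(x) − f(y))^p ≤ (α^p/2)(g(x)^p + g(y)^p) d(x,y)^p`. -/
theorem brooks_test_function_lipschitz {X : Type*} [Countable X]
    (b : X → X → ℝ) (hb0 : ∀ x y, 0 ≤ b x y) (hbsymm : ∀ x y, b x y = b y x)
    (hbdiag : ∀ x, b x x = 0) (hbsum : ∀ x, Summable (b x))
    (m : X → ℝ) (hm : ∀ x, 0 < m x) (p : ℝ) (hp : 1 ≤ p)
    (d : X → X → ℝ) (hd0 : ∀ x y, 0 ≤ d x y) (hdrefl : ∀ x, d x x = 0)
    (hdsymm : ∀ x y, d x y = d y x)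
    (hdtri : ∀ x y z, d x z ≤ d x y + d y z)
    (hdadapted : ∀ x, ∑' y, b x y * d x y ^ p ≤ m x)
    (x₀ : X) (r : ℕ) (α : ℝ) (hα : 0 < α)
    (f g : X → ℝ)
    (hf : ∀ x, f x =
      max (min (Real.exp (α * r)) (Real.exp (α * (2 * r - d x₀ x))) - 1) 0)
    (hg : ∀ x, g x = (f x + 2) * (if d x₀ x ≤ 2 * r then 1 else 0)) :
    ∀ x y, |f x - f y| ^ p ≤ (α ^ p / 2) * (g x ^ p + g y ^ p) * d x y ^ p := by
  have hp0 : (0:ℝ) ≤ p := le_trans zero_le_one hp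
  have hpne : p ≠ 0 := by linarith
  set φ : X → ℝ := fun z => max (min (α * r) (α * (2 * r - d x₀ z))) 0 with hφ
  have hfE : ∀ z, f z = Real.exp (φ z) - 1 := by
    intro z
    rw [hf]
    have h1 : min (Real.exp (α * r)) (Real.exp (α * (2 * r - d x₀ z)))
        = Real.exp (min (α * r) (α * (2 * r - d x₀ z))) :=
      (Real.exp_monotone.map_min).symm
    have hφz : φ z = max (min (α * r) (α * (2 * r - d x₀ z))) 0 := rfl
    rw [h1, hφz]
    rcases le_total (min (α * r) (α * (2 * r - d x₀ z))) 0 with h | h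
    · rw [max_eq_right h, max_eq_right (by simpa using Real.exp_le_exp.mpr h), Real.exp_zero]
      ring
    · rw [max_eq_left h, max_eq_left (by simpa using Real.exp_le_exp.mpr h)]
  have hφout : ∀ z, ¬ d x₀ z ≤ 2 * r → φ z = 0 := by
    intro z hz
    apply max_eq_right
    refine le_trans (min_le_right _ _) ?_
    have : 2 * (r:ℝ) - d x₀ z ≤ 0 := by linarith [not_le.mp hz]
    nlinarith
  have hg0 : ∀ z, 0 ≤ g z := by
    intro z
    rw [hg, hf]
    split_ifs <;> positivity
  intro x y
  have habs : |d x₀ x - d x₀ y| ≤ d x y := by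
    rw [abs_sub_le_iff]
    constructor
    · linarith [hdtri x₀ y x, hdsymm y x]
    · linarith [hdtri x₀ x y]
  have hφLip : |φ x - φ y| ≤ α * d x y := by
    have hφx : φ x = max (min (α * r) (α * (2 * r - d x₀ x))) 0 := rfl
    have hφy : φ y = max (min (α * r) (α * (2 * r - d x₀ y))) 0 := rfl
    rw [hφx, hφy]
    calc |max (min (α * r) (α * (2 * r - d x₀ x))) 0 - max (min (α * r) (α * (2 * r - d x₀ y))) 0|
        ≤ |min (α * r) (α * (2 * r - d x₀ x)) - min (α * r) (α * (2 * r - d x₀ y))| :=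
          abs_max_sub_max_le_abs _ _ _
      _ ≤ max |α * r - α * r| |α * (2 * r - d x₀ x) - α * (2 * r - d x₀ y)| :=
          abs_min_sub_min_le_max _ _ _ _
      _ ≤ α * d x y := by
          apply max_le
          · rw [sub_self, abs_zero]; exact mul_nonneg hα.le (hd0 x y)
          · have he : α * (2 * (r:ℝ) - d x₀ x) - α * (2 * r - d x₀ y)
                = α * (d x₀ y - d x₀ x) := by ring
            rw [he, abs_mul, abs_of_pos hα, abs_sub_comm]
            exact mul_le_mul_of_nonneg_left habs hα.le
  have hEsum0 : (0:ℝ) ≤ (Real.exp (φ x) + Real.exp (φ y)) / 2 := by positivity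
  have hfbound : |f x - f y| ≤ (α * d x y) * ((Real.exp (φ x) + Real.exp (φ y)) / 2) := by
    rw [hfE x, hfE y]
    have he : Real.exp (φ x) - 1 - (Real.exp (φ y) - 1) = Real.exp (φ x) - Real.exp (φ y) := by
      ring
    rw [he]
    calc |Real.exp (φ x) - Real.exp (φ y)|
        ≤ |φ x - φ y| * ((Real.exp (φ x) + Real.exp (φ y)) / 2) := exp_trapezoid _ _
      _ ≤ (α * d x y) * ((Real.exp (φ x) + Real.exp (φ y)) / 2) :=
          mul_le_mul_of_nonneg_right hφLip hEsum0
  have hstep : |f x - f y| ^ p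
      ≤ α ^ p * d x y ^ p * (((Real.exp (φ x) + Real.exp (φ y)) / 2) ^ p) := by
    calc |f x - f y| ^ p
        ≤ ((α * d x y) * ((Real.exp (φ x) + Real.exp (φ y)) / 2)) ^ p :=
          Real.rpow_le_rpow (abs_nonneg _) hfbound hp0
      _ = α ^ p * d x y ^ p * (((Real.exp (φ x) + Real.exp (φ y)) / 2) ^ p) := by
          rw [Real.mul_rpow (mul_nonneg hα.le (hd0 x y)) hEsum0, Real.mul_rpow hα.le (hd0 x y)]
  have hfinish : ((Real.exp (φ x) + Real.exp (φ y)) / 2) ^ p ≤ (g x ^ p + g y ^ p) / 2 →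
      |f x - f y| ^ p ≤ (α ^ p / 2) * (g x ^ p + g y ^ p) * d x y ^ p := by
    intro hC
    calc |f x - f y| ^ p
        ≤ α ^ p * d x y ^ p * (((Real.exp (φ x) + Real.exp (φ y)) / 2) ^ p) := hstep
      _ ≤ α ^ p * d x y ^ p * ((g x ^ p + g y ^ p) / 2) := by
          apply mul_le_mul_of_nonneg_left hC
          have := Real.rpow_nonneg hα.le p
          have := Real.rpow_nonneg (hd0 x y) p
          positivity
      _ = (α ^ p / 2) * (g x ^ p + g y ^ p) * d x y ^ p := by ring
  have h2p : (2:ℝ) ≤ 2 ^ p := by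
    calc (2:ℝ) = 2 ^ (1:ℝ) := (Real.rpow_one 2).symm
      _ ≤ 2 ^ p := Real.rpow_le_rpow_of_exponent_le one_le_two hp
  by_cases hx : d x₀ x ≤ 2 * r
  · by_cases hy : d x₀ y ≤ 2 * r
    · -- both inside the ball
      apply hfinish
      have hgx : g x = Real.exp (φ x) + 1 := by rw [hg x, if_pos hx, hfE x]; ring
      have hgy : g y = Real.exp (φ y) + 1 := by rw [hg y, if_pos hy, hfE y]; ring
      have hEx0 : (0:ℝ) ≤ Real.exp (φ x) := (Real.exp_pos _).le
      have hEy0 : (0:ℝ) ≤ Real.exp (φ y) := (Real.exp_pos _).le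
      calc ((Real.exp (φ x) + Real.exp (φ y)) / 2) ^ p
          ≤ (Real.exp (φ x) ^ p + Real.exp (φ y) ^ p) / 2 := rpow_midpoint hp hEx0 hEy0
        _ ≤ (g x ^ p + g y ^ p) / 2 := by
            have h1 : Real.exp (φ x) ^ p ≤ g x ^ p :=
              Real.rpow_le_rpow hEx0 (by rw [hgx]; linarith) hp0
            have h2 : Real.exp (φ y) ^ p ≤ g y ^ p :=
              Real.rpow_le_rpow hEy0 (by rw [hgy]; linarith) hp0
            linarith
    · -- x inside, y outside
      apply hfinish
      have hEy : Real.exp (φ y) = 1 := by rw [hφout y hy, Real.exp_zero]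
      have hgy : g y = 0 := by rw [hg y, if_neg hy]; ring
      have hgx : g x = Real.exp (φ x) + 1 := by rw [hg x, if_pos hx, hfE x]; ring
      rw [hEy, hgx, hgy, Real.zero_rpow hpne, add_zero]
      have hb0' : (0:ℝ) ≤ Real.exp (φ x) + 1 := by positivity
      rw [Real.div_rpow hb0' (by norm_num : (0:ℝ) ≤ 2)]
      exact div_le_div_of_nonneg_left (Real.rpow_nonneg hb0' p) two_pos h2p
  · by_cases hy : d x₀ y ≤ 2 * r
    · -- x outside, y inside
      apply hfinish
      have hEx : Real.exp (φ x) = 1 := by rw [hφout x hx, Real.exp_zero]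
      have hgx : g x = 0 := by rw [hg x, if_neg hx]; ring
      have hgy : g y = Real.exp (φ y) + 1 := by rw [hg y, if_pos hy, hfE y]; ring
      rw [hEx, hgx, hgy, Real.zero_rpow hpne, zero_add]
      have hb0' : (0:ℝ) ≤ Real.exp (φ y) + 1 := by positivity
      rw [show (1:ℝ) + Real.exp (φ y) = Real.exp (φ y) + 1 by ring,
        Real.div_rpow hb0' (by norm_num : (0:ℝ) ≤ 2)]
      exact div_le_div_of_nonneg_left (Real.rpow_nonneg hb0' p) two_pos h2p
    · -- both outside the ball
      have hfx : f x = 0 := by rw [hfE, hφout x hx, Real.exp_zero]; ring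
      have hfy : f y = 0 := by rw [hfE, hφout y hy, Real.exp_zero]; ring
      rw [hfx, hfy, sub_zero, abs_zero, Real.zero_rpow hpne]
      have := Real.rpow_nonneg (hg0 x) p
      have := Real.rpow_nonneg (hg0 y) p
      have := Real.rpow_nonneg (hd0 x y) p
      have := Real.rpow_nonneg hα.le p
      positivity
end

section
/- Let X be a finite set, b a graph over (X, m), and p > 1. Suppose f : X → ℝ is a non-constant function satisfying, for all g : X → ℝ, (1/2)Σ_{x,y} b(x,y)|f(x)−f(y)|^(p−2)(f(x)−f(y))(g(x)−g(y)) = λ · Σ_x |f(x)|^(p−2) f(x) g(x) m(x) for some λ > 0 (weak eigenfunction equation). Then Σ_x |f(x)|^(p−2) f(x) m(x) = 0, f takes both positive and negative values, and E_p(f₊) ≤ λ‖f₊‖_{m,p}^p, where f₊ = max(f,0). -/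
lemma key_ineq (p : ℝ) (hp : 1 < p) (r s : ℝ) :
    |max r 0 - max s 0| ^ p ≤ |r - s| ^ (p - 2) * (r - s) * (max r 0 - max s 0) := by
  rcases eq_or_ne r s with h | h
  · subst h
    simp [Real.zero_rpow (by positivity : p ≠ 0)]
  · set d := r - s with hd
    set a := max r 0 - max s 0 with ha
    have hdne : |d| ≠ 0 := abs_ne_zero.mpr (sub_ne_zero.mpr h)
    have hdpos : 0 < |d| := (abs_nonneg d).lt_of_ne' hdne
    have h1 : |a| ≤ |d| := abs_max_sub_max_le_abs r s 0
    have h2 : 0 ≤ d * a := by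
      rcases le_total s r with hle | hle
      · exact mul_nonneg (by simp [hd, hle]) (by simp [ha, max_le_max hle le_rfl])
      · have hd' : d ≤ 0 := by simp [hd, hle]
        have ha' : a ≤ 0 := sub_nonpos.mpr (max_le_max hle le_rfl)
        nlinarith
    have hda : d * a = |d| * |a| := by
      rw [← abs_mul]; exact (abs_of_nonneg h2).symm
    have hRHS : |d| ^ (p - 2) * d * a = |d| ^ (p - 1) * |a| := by
      rw [mul_assoc, hda, ← mul_assoc]
      congr 1
      rw [← Real.rpow_add_one hdne (p - 2)]
      ring_nf
    rw [hRHS]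
    rcases eq_or_ne a 0 with h0 | h0
    · rw [h0]
      simp [Real.zero_rpow (by positivity : p ≠ 0)]
    · have hane : |a| ≠ 0 := abs_ne_zero.mpr h0
      have : |a| ^ p = |a| ^ (p - 1) * |a| := by
        rw [← Real.rpow_add_one hane (p - 1)]; ring_nf
      rw [this]
      exact mul_le_mul_of_nonneg_right
        (Real.rpow_le_rpow (abs_nonneg a) h1 (by linarith)) (abs_nonneg a)

lemma pos_part_pow (p : ℝ) (hp : 1 < p) (t : ℝ) :
    |t| ^ (p - 2) * t * max t 0 = (max t 0) ^ p := by
  rcases le_or_gt t 0 with h | h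
  · rw [max_eq_right h]
    simp [Real.zero_rpow (by positivity : p ≠ 0)]
  · rw [max_eq_left h.le, abs_of_pos h]
    rw [← Real.rpow_add_one h.ne' (p - 2), ← Real.rpow_add_one h.ne' (p - 2 + 1)]
    ring_nf

/-- Properties of non-constant weak eigenfunctions of the p-Laplacian (from the
proof of Theorem 3.2): the `p`-mean vanishes, `f` changes sign, and the positive part
is a subsolution: `E_p(f₊) ≤ λ ‖f₊‖_{m,p}^p`. (Real powers: `|t|^(p-2)·t = 0` at
`t = 0` since the linear factor vanishes, matching the paper's convention.) -/
theorem weak_eigenfunction_properties {X : Type*} [Fintype X]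
    (b : X → X → ℝ) (hb0 : ∀ x y, 0 ≤ b x y) (hbsymm : ∀ x y, b x y = b y x)
    (hbdiag : ∀ x, b x x = 0)
    (m : X → ℝ) (hm : ∀ x, 0 < m x) (p : ℝ) (hp : 1 < p)
    (f : X → ℝ) (hfnc : ∃ x y, f x ≠ f y)
    (lam : ℝ) (hlam : 0 < lam)
    (hweak : ∀ g : X → ℝ,
      (1 / 2) * ∑ x, ∑ y, b x y * |f x - f y| ^ (p - 2) * (f x - f y) * (g x - g y) =
        lam * ∑ x, |f x| ^ (p - 2) * f x * g x * m x) :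
    (∑ x, |f x| ^ (p - 2) * f x * m x = 0) ∧
    (∃ x, 0 < f x) ∧ (∃ x, f x < 0) ∧
    (1 / 2) * ∑ x, ∑ y, b x y * |max (f x) 0 - max (f y) 0| ^ p ≤
      lam * ∑ x, m x * (max (f x) 0) ^ p := by
  have h1 := hweak (fun _ => 1)
  simp only [sub_self, mul_zero, Finset.sum_const_zero, mul_one] at h1
  have hsum : ∑ x, |f x| ^ (p - 2) * f x * m x = 0 := by
    have := h1.symm
    rcases mul_eq_zero.mp this with h | h
    · exact absurd h hlam.ne'
    · exact h
  have key0 : ∀ x : X, |f x| ^ (p - 2) * f x * m x = 0 → f x = 0 := by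
    intro x hx
    by_contra h0
    have habs : 0 < |f x| ^ (p - 2) := Real.rpow_pos_of_pos (abs_pos.mpr h0) _
    rcases lt_or_gt_of_ne h0 with hlt | hgt
    · exact absurd hx (mul_neg_of_neg_of_pos (mul_neg_of_pos_of_neg habs hlt) (hm x)).ne
    · exact absurd hx (mul_pos (mul_pos habs hgt) (hm x)).ne'
  have hpos : ∃ x, 0 < f x := by
    by_contra h
    push_neg at h
    have hz : ∀ x ∈ Finset.univ, f x = 0 := by
      intro x _
      refine key0 x ?_
      refine (Finset.sum_eq_zero_iff_of_nonpos ?_).mp hsum x (Finset.mem_univ x)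
      intro y _
      have : |f y| ^ (p - 2) * f y ≤ 0 :=
        mul_nonpos_of_nonneg_of_nonpos (by positivity) (h y)
      exact mul_nonpos_of_nonpos_of_nonneg this (hm y).le
    obtain ⟨x, y, hxy⟩ := hfnc
    exact hxy (by rw [hz x (Finset.mem_univ x), hz y (Finset.mem_univ y)])
  have hneg : ∃ x, f x < 0 := by
    by_contra h
    push_neg at h
    have hz : ∀ x ∈ Finset.univ, f x = 0 := by
      intro x _
      refine key0 x ?_
      refine (Finset.sum_eq_zero_iff_of_nonneg ?_).mp hsum x (Finset.mem_univ x)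
      intro y _
      have : 0 ≤ |f y| ^ (p - 2) * f y := mul_nonneg (by positivity) (h y)
      exact mul_nonneg this (hm y).le
    obtain ⟨x, y, hxy⟩ := hfnc
    exact hxy (by rw [hz x (Finset.mem_univ x), hz y (Finset.mem_univ y)])
  refine ⟨hsum, hpos, hneg, ?_⟩
  have h3 := hweak (fun x => max (f x) 0)
  have hRHS : ∑ x, |f x| ^ (p - 2) * f x * max (f x) 0 * m x
      = ∑ x, m x * (max (f x) 0) ^ p := by
    refine Finset.sum_congr rfl fun x _ => ?_
    rw [pos_part_pow p hp (f x)]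
    ring
  rw [hRHS] at h3
  rw [← h3]
  have hle : ∑ x, ∑ y, b x y * |max (f x) 0 - max (f y) 0| ^ p ≤
      ∑ x, ∑ y, b x y * |f x - f y| ^ (p - 2) * (f x - f y) * (max (f x) 0 - max (f y) 0) := by
    refine Finset.sum_le_sum fun x _ => Finset.sum_le_sum fun y _ => ?_
    calc b x y * |max (f x) 0 - max (f y) 0| ^ p
        ≤ b x y * (|f x - f y| ^ (p - 2) * (f x - f y) * (max (f x) 0 - max (f y) 0)) :=
          mul_le_mul_of_nonneg_left (key_ineq p hp (f x) (f y)) (hb0 x y)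
      _ = b x y * |f x - f y| ^ (p - 2) * (f x - f y) * (max (f x) 0 - max (f y) 0) := by ring
  linarith
end
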